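/- arXiv:1905.08862 — 3 statements merged into one kernel-verified Lean document; each statement's English description precedes it below -/
import Mathlib

section
/- Let n ≥ 2 and let K and L be convex bodies in ℝⁿ with K ∩ L ≠ ∅. Then ∫_{S^{n−1}} (h_K(u) + h_L(u) − 2·h_{K∩L}(u)) dσ(u) ≥ ∫_{S^{n−1}} |h_K(u) − h_L(u)| dσ(u), with equality if and only if K ∪ L is convex. In particular, equality holds whenever K ⊂ L. -/
open MeasureTheory

/-- The support function `h_K(u) = sup_{x ∈ K} ⟪x, u⟫` of a set `K ⊆ ℝⁿ`. -/
noncomputable def suppFn {n : ℕ} (K : Set (EuclideanSpace ℝ (Fin n)))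
    (u : EuclideanSpace ℝ (Fin n)) : ℝ :=
  sSup ((fun x => (inner ℝ x u : ℝ)) '' K)

/-- The uniform (rotation invariant) probability measure `σ` on the unit sphere
`S^{n-1} ⊆ ℝⁿ`. -/
noncomputable def sphereProb (n : ℕ) :
    Measure (Metric.sphere (0 : EuclideanSpace ℝ (Fin n)) 1) :=
  ((volume : Measure (EuclideanSpace ℝ (Fin n))).toSphere Set.univ)⁻¹ •
    (volume : Measure (EuclideanSpace ℝ (Fin n))).toSphere

open Set Metric

/-!
Since `h_{K ∩ L} ≤ min (h_K, h_L)` and `|a - b| = a + b - 2 min (a, b)`, the left integrand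
dominates `|h_K - h_L|` pointwise. Both are continuous and `σ` charges every nonempty open set,
so the integrals agree iff `h_{K ∩ L} = min (h_K, h_L)` on the sphere, hence everywhere by
positive homogeneity.

If `K ∪ L` is convex, the segment joining maximisers of `⟪·, u⟫` on `K` and on `L` stays in
`K ∪ L`, so by connectedness it meets `K ∩ L`, which gives `h_{K ∩ L}(u) ≥ min (h_K(u), h_L(u))`.
Conversely, if `z = a x + b y ∉ K ∪ L` with `x ∈ K`, `y ∈ L`, then `f = h_K - ⟪z, ·⟫` and
`g = h_L - ⟪z, ·⟫` satisfy `max (f, g) ≥ 0`, while `min (f, g) = h_{K ∩ L} - ⟪z, ·⟫` is convex.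
The intermediate value theorem on a segment forces `f ≥ 0` or `g ≥ 0` everywhere, and then `z`
lies in `K` or in `L` by the separation theorem.
-/

theorem abs_sub_eq_add_sub_two_mul_min (a b : ℝ) : |a - b| = a + b - 2 * min a b := by
  linarith [max_sub_min_eq_abs' a b, min_add_max a b]

theorem forall_nonneg_or_forall_nonneg_of_convexOn_min {E : Type*} [AddCommGroup E]
    [Module ℝ E] [TopologicalSpace E] [ContinuousAdd E] [ContinuousSMul ℝ E] {f g : E → ℝ}
    (hf : Continuous f) (hg : Continuous g) (hmin : ConvexOn ℝ univ fun w => min (f w) (g w))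
    (hmax : ∀ w, 0 ≤ max (f w) (g w)) : (∀ w, 0 ≤ f w) ∨ ∀ w, 0 ≤ g w := by
  by_contra! ⟨⟨u, hu⟩, v, hv⟩
  have hgu : 0 ≤ g u := by simpa [hu.not_ge] using hmax u
  have hfv : 0 ≤ f v := by simpa [hv.not_ge] using hmax v
  set γ : ℝ → E := fun s => (1 - s) • u + s • v
  have hγ : Continuous γ := by fun_prop
  obtain ⟨s, ⟨hs0, hs1⟩, hs⟩ := intermediate_value_Icc zero_le_one
    ((hf.comp hγ).sub (hg.comp hγ)).continuousOn
    (show (0 : ℝ) ∈ Icc (f (γ 0) - g (γ 0)) (f (γ 1) - g (γ 1)) by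
      simp only [γ]; constructor <;> simp <;> linarith)
  have hfg : f (γ s) = g (γ s) := sub_eq_zero.1 hs
  have h_nonneg : 0 ≤ min (f (γ s)) (g (γ s)) := by simpa [hfg] using hmax (γ s)
  have h_neg : min (f (γ s)) (g (γ s)) < 0 :=
    calc min (f (γ s)) (g (γ s))
        ≤ (1 - s) • min (f u) (g u) + s • min (f v) (g v) :=
          hmin.2 trivial trivial (by linarith) hs0 (by ring)
      _ ≤ max (min (f u) (g u)) (min (f v) (g v)) :=
          Convex.combo_le_max _ _ (by linarith) hs0 (by ring)
      _ < 0 := max_lt ((min_le_left _ _).trans_lt hu) ((min_le_right _ _).trans_lt hv)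
  linarith

section SupportFunction

variable {n : ℕ} {K L : Set (EuclideanSpace ℝ (Fin n))}

local notation "E" => EuclideanSpace ℝ (Fin n)

theorem inner_le_suppFn (hK : IsCompact K) {x : E} (hx : x ∈ K) (u : E) :
    inner ℝ x u ≤ suppFn K u :=
  le_csSup (hK.image (continuous_id.inner continuous_const)).bddAbove ⟨x, hx, rfl⟩

theorem suppFn_le (hK : K.Nonempty) {u : E} {c : ℝ} (h : ∀ x ∈ K, inner ℝ x u ≤ c) :
    suppFn K u ≤ c :=
  csSup_le (hK.image _) (forall_mem_image.2 h)

theorem exists_inner_eq_suppFn (hK : IsCompact K) (hne : K.Nonempty) (u : E) :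
    ∃ x ∈ K, inner ℝ x u = suppFn K u := by
  have hcont : Continuous fun x : E => inner ℝ x u := by fun_prop
  obtain ⟨x, hx, hmax⟩ := hK.exists_isMaxOn hne hcont.continuousOn
  exact ⟨x, hx, (inner_le_suppFn hK hx u).antisymm (suppFn_le hne fun y hy => hmax hy)⟩

theorem suppFn_mono (hL : IsCompact L) (hKL : K ⊆ L) (hK : K.Nonempty) (u : E) :
    suppFn K u ≤ suppFn L u :=
  suppFn_le hK fun _ hx => inner_le_suppFn hL (hKL hx) u

theorem suppFn_smul (hK : IsCompact K) (hne : K.Nonempty) {c : ℝ} (hc : 0 ≤ c) (u : E) :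
    suppFn K (c • u) = c * suppFn K u := by
  refine le_antisymm (suppFn_le hne fun x hx => ?_) ?_
  · rw [real_inner_smul_right]
    exact mul_le_mul_of_nonneg_left (inner_le_suppFn hK hx u) hc
  · obtain ⟨x, hx, hxu⟩ := exists_inner_eq_suppFn hK hne u
    rw [← hxu, ← real_inner_smul_right]
    exact inner_le_suppFn hK hx _

theorem suppFn_zero (hK : IsCompact K) (hne : K.Nonempty) : suppFn K 0 = 0 := by
  simpa using suppFn_smul hK hne le_rfl (0 : E)

theorem convexOn_suppFn (hK : IsCompact K) (hne : K.Nonempty) : ConvexOn ℝ univ (suppFn K) := by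
  refine ⟨convex_univ, fun u _ v _ a b ha hb _ => suppFn_le hne fun x hx => ?_⟩
  rw [inner_add_right, real_inner_smul_right, real_inner_smul_right]
  exact add_le_add (mul_le_mul_of_nonneg_left (inner_le_suppFn hK hx u) ha)
    (mul_le_mul_of_nonneg_left (inner_le_suppFn hK hx v) hb)

theorem continuous_suppFn (hK : IsCompact K) (hne : K.Nonempty) : Continuous (suppFn K) := by
  simpa [continuousOn_univ] using (convexOn_suppFn hK hne).continuousOn_interior

theorem mem_of_forall_inner_le_suppFn (hK : IsClosed K) (hKcv : Convex ℝ K) (hne : K.Nonempty)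
    {z : E} (hz : ∀ u, inner ℝ z u ≤ suppFn K u) : z ∈ K := by
  by_contra hzK
  obtain ⟨f, c, hfK, hfz⟩ := geometric_hahn_banach_closed_point hKcv hK hzK
  have hf : ∀ x, inner ℝ x ((InnerProductSpace.toDual ℝ E).symm f) = f x := fun x => by
    rw [real_inner_comm, InnerProductSpace.toDual_symm_apply]
  have := (hz _).trans (suppFn_le hne fun x hx => (hf x).trans_le (hfK x hx).le)
  rw [hf] at this
  linarith

theorem suppFn_inter_le_min (hK : IsCompact K) (hL : IsCompact L) (hKL : (K ∩ L).Nonempty)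
    (u : E) : suppFn (K ∩ L) u ≤ min (suppFn K u) (suppFn L u) :=
  le_min (suppFn_mono hK inter_subset_left hKL u) (suppFn_mono hL inter_subset_right hKL u)

theorem abs_sub_suppFn_le (hK : IsCompact K) (hL : IsCompact L) (hKL : (K ∩ L).Nonempty)
    (u : E) : |suppFn K u - suppFn L u| ≤ suppFn K u + suppFn L u - 2 * suppFn (K ∩ L) u := by
  rw [abs_sub_eq_add_sub_two_mul_min]
  linarith [suppFn_inter_le_min hK hL hKL u]

theorem suppFn_inter_eq_min_of_convex_union (hK : IsCompact K) (hL : IsCompact L)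
    (hKL : (K ∩ L).Nonempty) (hconv : Convex ℝ (K ∪ L)) (u : E) :
    suppFn (K ∩ L) u = min (suppFn K u) (suppFn L u) := by
  refine (suppFn_inter_le_min hK hL hKL u).antisymm ?_
  obtain ⟨x, hxK, hx⟩ := exists_inner_eq_suppFn hK (hKL.mono inter_subset_left) u
  obtain ⟨y, hyL, hy⟩ := exists_inner_eq_suppFn hL (hKL.mono inter_subset_right) u
  obtain ⟨_, ⟨a, b, ha, hb, hab, rfl⟩, hp⟩ : (segment ℝ x y ∩ (K ∩ L)).Nonempty :=
    isPreconnected_closed_iff.1 (convex_segment x y).isPreconnected K L hK.isClosed hL.isClosed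
      (hconv.segment_subset (subset_union_left hxK) (subset_union_right hyL))
      ⟨x, left_mem_segment ℝ x y, hxK⟩ ⟨y, right_mem_segment ℝ x y, hyL⟩
  calc min (suppFn K u) (suppFn L u) ≤ a • suppFn K u + b • suppFn L u :=
        Convex.min_le_combo _ _ ha hb hab
    _ = inner ℝ (a • x + b • y) u := by
        rw [inner_add_left, real_inner_smul_left, real_inner_smul_left, hx, hy, smul_eq_mul,
          smul_eq_mul]
    _ ≤ suppFn (K ∩ L) u := inner_le_suppFn (hK.inter_right hL.isClosed) hp u

theorem smul_add_smul_mem_union_of_suppFn_inter_eq_min (hK : IsCompact K) (hKcv : Convex ℝ K)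
    (hL : IsCompact L) (hLcv : Convex ℝ L) (hKL : (K ∩ L).Nonempty)
    (hmin : ∀ u, suppFn (K ∩ L) u = min (suppFn K u) (suppFn L u)) {x y : E} (hx : x ∈ K)
    (hy : y ∈ L) {a b : ℝ} (ha : 0 ≤ a) (hb : 0 ≤ b) (hab : a + b = 1) :
    a • x + b • y ∈ K ∪ L := by
  have hKne : K.Nonempty := hKL.mono inter_subset_left
  have hLne : L.Nonempty := hKL.mono inter_subset_right
  set z := a • x + b • y
  have hz : ∀ u, inner ℝ z u ≤ max (suppFn K u) (suppFn L u) := fun u =>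
    calc inner ℝ z u = a • inner ℝ x u + b • inner ℝ y u := by
          rw [inner_add_left, real_inner_smul_left, real_inner_smul_left, smul_eq_mul,
            smul_eq_mul]
      _ ≤ a • suppFn K u + b • suppFn L u := by
          gcongr
          exacts [inner_le_suppFn hK hx u, inner_le_suppFn hL hy u]
      _ ≤ max (suppFn K u) (suppFn L u) := Convex.combo_le_max _ _ ha hb hab
  have hzc : Continuous fun u => inner ℝ z u := continuous_const.inner continuous_id
  refine (forall_nonneg_or_forall_nonneg_of_convexOn_min
    (f := fun u => suppFn K u - inner ℝ z u) (g := fun u => suppFn L u - inner ℝ z u)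
    ((continuous_suppFn hK hKne).sub hzc) ((continuous_suppFn hL hLne).sub hzc) ?_ ?_).imp
    (fun h => mem_of_forall_inner_le_suppFn hK.isClosed hKcv hKne fun u => sub_nonneg.1 (h u))
    (fun h => mem_of_forall_inner_le_suppFn hL.isClosed hLcv hLne fun u => sub_nonneg.1 (h u))
  · simp_rw [min_sub_sub_right, ← hmin]
    exact (convexOn_suppFn (hK.inter_right hL.isClosed) hKL).sub
      ((innerₛₗ ℝ z).concaveOn convex_univ)
  · intro u
    rw [max_sub_sub_right, sub_nonneg]
    exact hz u

theorem convex_union_of_suppFn_inter_eq_min (hK : IsCompact K) (hKcv : Convex ℝ K)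
    (hL : IsCompact L) (hLcv : Convex ℝ L) (hKL : (K ∩ L).Nonempty)
    (hmin : ∀ u, suppFn (K ∩ L) u = min (suppFn K u) (suppFn L u)) : Convex ℝ (K ∪ L) := by
  intro x hx y hy a b ha hb hab
  rcases hx with hxK | hxL <;> rcases hy with hyK | hyL
  · exact Or.inl (hKcv hxK hyK ha hb hab)
  · exact smul_add_smul_mem_union_of_suppFn_inter_eq_min hK hKcv hL hLcv hKL hmin hxK hyL ha hb hab
  · rw [add_comm]
    exact smul_add_smul_mem_union_of_suppFn_inter_eq_min hK hKcv hL hLcv hKL hmin hyK hxL hb ha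
      ((add_comm b a).trans hab)
  · exact Or.inr (hLcv hxL hyL ha hb hab)

theorem suppFn_inter_eq_min_of_forall_mem_sphere (hK : IsCompact K) (hL : IsCompact L)
    (hKL : (K ∩ L).Nonempty)
    (h : ∀ u ∈ sphere (0 : E) 1, suppFn (K ∩ L) u = min (suppFn K u) (suppFn L u)) (u : E) :
    suppFn (K ∩ L) u = min (suppFn K u) (suppFn L u) := by
  have hKLc : IsCompact (K ∩ L) := hK.inter_right hL.isClosed
  have hKne : K.Nonempty := hKL.mono inter_subset_left
  have hLne : L.Nonempty := hKL.mono inter_subset_right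
  rcases eq_or_ne u 0 with rfl | hu
  · simp [suppFn_zero hKLc hKL, suppFn_zero hK hKne, suppFn_zero hL hLne]
  · have hu' : u = ‖u‖ • (‖u‖⁻¹ • u) := (smul_inv_smul₀ (norm_ne_zero_iff.2 hu) u).symm
    rw [hu', suppFn_smul hKLc hKL (norm_nonneg u), suppFn_smul hK hKne (norm_nonneg u),
      suppFn_smul hL hLne (norm_nonneg u), h _ (by simp [norm_smul, hu]),
      mul_min_of_nonneg _ _ (norm_nonneg u)]

theorem integral_abs_sub_suppFn_le (μ : Measure (sphere (0 : E) 1)) [IsFiniteMeasure μ]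
    (hK : IsCompact K) (hL : IsCompact L) (hKL : (K ∩ L).Nonempty) :
    ∫ u, |suppFn K ↑u - suppFn L ↑u| ∂μ
      ≤ ∫ u, (suppFn K ↑u + suppFn L ↑u - 2 * suppFn (K ∩ L) ↑u) ∂μ := by
  have hKc := continuous_suppFn hK (hKL.mono inter_subset_left)
  have hLc := continuous_suppFn hL (hKL.mono inter_subset_right)
  have hKLc := continuous_suppFn (hK.inter_right hL.isClosed) hKL
  refine integral_mono ?_ ?_ fun u => abs_sub_suppFn_le hK hL hKL u
  · exact Continuous.integrable_of_hasCompactSupport (by fun_prop) (.of_compactSpace _)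
  · exact Continuous.integrable_of_hasCompactSupport (by fun_prop) (.of_compactSpace _)

theorem integral_eq_integral_iff_convex_union (μ : Measure (sphere (0 : E) 1))
    [IsFiniteMeasure μ] [μ.IsOpenPosMeasure] (hK : IsCompact K) (hKcv : Convex ℝ K)
    (hL : IsCompact L) (hLcv : Convex ℝ L) (hKL : (K ∩ L).Nonempty) :
    ∫ u, (suppFn K ↑u + suppFn L ↑u - 2 * suppFn (K ∩ L) ↑u) ∂μ
        = ∫ u, |suppFn K ↑u - suppFn L ↑u| ∂μ ↔ Convex ℝ (K ∪ L) := by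
  have hKc := continuous_suppFn hK (hKL.mono inter_subset_left)
  have hLc := continuous_suppFn hL (hKL.mono inter_subset_right)
  have hKLc := continuous_suppFn (hK.inter_right hL.isClosed) hKL
  set F := fun u : sphere (0 : E) 1 => suppFn K u + suppFn L u - 2 * suppFn (K ∩ L) u
  set G := fun u : sphere (0 : E) 1 => |suppFn K u - suppFn L u|
  have hF : Continuous F := by fun_prop
  have hG : Continuous G := by fun_prop
  rw [eq_comm, integral_eq_iff_of_ae_le
    (hG.integrable_of_hasCompactSupport (.of_compactSpace _))
    (hF.integrable_of_hasCompactSupport (.of_compactSpace _))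
    (ae_of_all _ fun u => abs_sub_suppFn_le hK hL hKL u), hG.ae_eq_iff_eq μ hF]
  refine ⟨fun h => convex_union_of_suppFn_inter_eq_min hK hKcv hL hLcv hKL
    (suppFn_inter_eq_min_of_forall_mem_sphere hK hL hKL fun u hu => ?_), fun h => ?_⟩
  · have := congr_fun h ⟨u, hu⟩
    simp only [F, G, abs_sub_eq_add_sub_two_mul_min] at this
    linarith
  · ext u
    simp only [F, G, abs_sub_eq_add_sub_two_mul_min,
      suppFn_inter_eq_min_of_convex_union hK hL hKL h]

end SupportFunction

instance {n : ℕ} : IsFiniteMeasure (sphereProb n) := by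
  unfold sphereProb
  infer_instance

instance {n : ℕ} : (sphereProb n).IsOpenPosMeasure :=
  Measure.isOpenPosMeasure_smul _ (ENNReal.inv_ne_zero.2 (measure_ne_top _ _))

theorem stmt0_general {n : ℕ}
    (K L : Set (EuclideanSpace ℝ (Fin n)))
    (hKcp : IsCompact K) (hKcv : Convex ℝ K)
    (hLcp : IsCompact L) (hLcv : Convex ℝ L)
    (hKL : (K ∩ L).Nonempty) :
    (∫ u : Metric.sphere (0 : EuclideanSpace ℝ (Fin n)) 1,
        |suppFn K ↑u - suppFn L ↑u| ∂(sphereProb n))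
      ≤ (∫ u : Metric.sphere (0 : EuclideanSpace ℝ (Fin n)) 1,
          (suppFn K ↑u + suppFn L ↑u - 2 * suppFn (K ∩ L) ↑u) ∂(sphereProb n))
    ∧ ((∫ u : Metric.sphere (0 : EuclideanSpace ℝ (Fin n)) 1,
          (suppFn K ↑u + suppFn L ↑u - 2 * suppFn (K ∩ L) ↑u) ∂(sphereProb n))
        = (∫ u : Metric.sphere (0 : EuclideanSpace ℝ (Fin n)) 1,
            |suppFn K ↑u - suppFn L ↑u| ∂(sphereProb n))
        ↔ Convex ℝ (K ∪ L))
    ∧ (K ⊆ L →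
        (∫ u : Metric.sphere (0 : EuclideanSpace ℝ (Fin n)) 1,
            (suppFn K ↑u + suppFn L ↑u - 2 * suppFn (K ∩ L) ↑u) ∂(sphereProb n))
          = (∫ u : Metric.sphere (0 : EuclideanSpace ℝ (Fin n)) 1,
              |suppFn K ↑u - suppFn L ↑u| ∂(sphereProb n))) := by
  have hEq := integral_eq_integral_iff_convex_union (sphereProb n) hKcp hKcv hLcp hLcv hKL
  refine ⟨integral_abs_sub_suppFn_le _ hKcp hLcp hKL, hEq, fun hsub => hEq.2 ?_⟩
  rwa [union_eq_right.2 hsub]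

/-- If `K, L ⊆ ℝⁿ` (`n ≥ 2`) are convex bodies with `K ∩ L ≠ ∅`, then
`∫_{S^{n-1}} (h_K + h_L - 2 h_{K∩L}) dσ ≥ ∫_{S^{n-1}} |h_K - h_L| dσ`, with equality
if and only if `K ∪ L` is convex; in particular equality holds whenever `K ⊆ L`. -/
theorem stmt0 {n : ℕ} (hn : 2 ≤ n)
    (K L : Set (EuclideanSpace ℝ (Fin n)))
    (hKcp : IsCompact K) (hKcv : Convex ℝ K) (hKint : (interior K).Nonempty)
    (hLcp : IsCompact L) (hLcv : Convex ℝ L) (hLint : (interior L).Nonempty)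
    (hKL : (K ∩ L).Nonempty) :
    (∫ u : Metric.sphere (0 : EuclideanSpace ℝ (Fin n)) 1,
        |suppFn K ↑u - suppFn L ↑u| ∂(sphereProb n))
      ≤ (∫ u : Metric.sphere (0 : EuclideanSpace ℝ (Fin n)) 1,
          (suppFn K ↑u + suppFn L ↑u - 2 * suppFn (K ∩ L) ↑u) ∂(sphereProb n))
    ∧ ((∫ u : Metric.sphere (0 : EuclideanSpace ℝ (Fin n)) 1,
          (suppFn K ↑u + suppFn L ↑u - 2 * suppFn (K ∩ L) ↑u) ∂(sphereProb n))
        = (∫ u : Metric.sphere (0 : EuclideanSpace ℝ (Fin n)) 1,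
            |suppFn K ↑u - suppFn L ↑u| ∂(sphereProb n))
        ↔ Convex ℝ (K ∪ L))
    ∧ (K ⊆ L →
        (∫ u : Metric.sphere (0 : EuclideanSpace ℝ (Fin n)) 1,
            (suppFn K ↑u + suppFn L ↑u - 2 * suppFn (K ∩ L) ↑u) ∂(sphereProb n))
          = (∫ u : Metric.sphere (0 : EuclideanSpace ℝ (Fin n)) 1,
              |suppFn K ↑u - suppFn L ↑u| ∂(sphereProb n))) :=
  stmt0_general K L hKcp hKcv hLcp hLcv hKL
end

section
/- Let n ≥ 2, let K be a convex body in ℝⁿ, let ε > 0 be such that ε·Dₙ is contained in the interior of K, and let q be a real number with 0 < q ≤ n. Then there exists η > 0 such that every nonempty compact convex set P ⊂ ℝⁿ that does not contain ε·Dₙ satisfies ∫_{K∖P} ‖x‖^{q−n} dx ≥ η. -/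
open MeasureTheory Metric Set

/-!
Since `ε·Dₙ ⊆ interior K`, some larger ball `(ε + δ)·Dₙ` still lies in `K`. If `P` misses a
point `z` of `ε·Dₙ`, a hyperplane separates `z` from `P`, and on the far side of it the ball of
radius `δ / 2` centred at distance `ε + δ / 2` from the origin in the normal direction misses `P`.
That ball lies in `K \ P` and in the annulus `ε ≤ ‖x‖ ≤ ε + δ`, where `‖x‖ ^ (q - n)` is at least
`(ε + δ) ^ (q - n)`; its volume does not depend on `P`. Local integrability of `‖x‖ ^ (q - n)`
(as `q > 0`) makes the integral over `K \ P` meaningful and bounded below by that over the ball.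
-/

theorem norm_mem_Icc_of_mem_closedBall {E : Type*} [SeminormedAddCommGroup E] {c x : E} {r : ℝ}
    (hx : x ∈ closedBall c r) : ‖x‖ ∈ Icc (‖c‖ - r) (‖c‖ + r) := by
  rw [mem_closedBall, dist_eq_norm] at hx
  have := abs_le.1 ((abs_norm_sub_norm_le x c).trans hx)
  constructor <;> linarith [this.1, this.2]

theorem exists_closedBall_subset_of_closedBall_subset_interior {E : Type*}
    [SeminormedAddCommGroup E] [NormedSpace ℝ E] [ProperSpace E] {K : Set E} {x : E} {ε : ℝ}
    (hε : 0 ≤ ε) (h : closedBall x ε ⊆ interior K) :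
    ∃ δ > 0, closedBall x (ε + δ) ⊆ K := by
  obtain ⟨δ, hδ, hδK⟩ := (isCompact_closedBall x ε).exists_cthickening_subset_open isOpen_interior h
  refine ⟨δ, hδ, ?_⟩
  rw [add_comm, ← cthickening_closedBall hδ.le hε]
  exact hδK.trans interior_subset

theorem integrableOn_norm_rpow_of_isCompact {E : Type*} [NormedAddCommGroup E]
    [NormedSpace ℝ E] [FiniteDimensional ℝ E] [MeasurableSpace E] [BorelSpace E]
    {μ : Measure E} [μ.IsAddHaarMeasure] (hd : 1 ≤ Module.finrank ℝ E) {s : ℝ}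
    (hs : -(Module.finrank ℝ E : ℝ) < s) {K : Set E} (hK : IsCompact K) :
    IntegrableOn (fun x ↦ ‖x‖ ^ s) K μ := by
  refine (locallyIntegrable_of_norm_le_rpow hd (C := 1) (α := -s) (by linarith)
    (ae_of_all _ fun x ↦ ?_)
    (measurable_norm.pow_const s).aestronglyMeasurable).integrableOn_isCompact hK
  rw [neg_neg, one_mul, Real.norm_of_nonneg (by positivity)]

theorem exists_closedBall_disjoint_of_notMem_convex {E : Type*} [NormedAddCommGroup E]
    [InnerProductSpace ℝ E] [CompleteSpace E] {P : Set E} (hPne : P.Nonempty)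
    (hPcv : Convex ℝ P) (hPcl : IsClosed P) {z : E} (hz : z ∉ P) {ε r : ℝ} (hzε : ‖z‖ ≤ ε)
    (hr : 0 ≤ r) : ∃ c : E, ‖c‖ = ε + r ∧ Disjoint (closedBall c r) P := by
  obtain ⟨f, u, hfP, hfz⟩ := geometric_hahn_banach_closed_point hPcv hPcl hz
  set w := (InnerProductSpace.toDual ℝ E).symm f
  have hf : ∀ x, f x = inner ℝ w x := fun x ↦ (InnerProductSpace.toDual_symm_apply).symm
  have hw : 0 < ‖w‖ := by
    obtain ⟨p, hp⟩ := hPne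
    refine norm_pos_iff.2 fun hw0 ↦ ?_
    have := hfP p hp
    rw [hf, hw0, inner_zero_left] at this hfz
    linarith
  have hεr : 0 ≤ ε + r := by linarith [norm_nonneg z]
  set c := ((ε + r) / ‖w‖) • w
  refine ⟨c, ?_, Set.disjoint_left.2 fun x hx hxP ↦ ?_⟩
  · rw [norm_smul, Real.norm_of_nonneg (by positivity), div_mul_cancel₀ _ hw.ne']
  have hwz : inner ℝ w z ≤ ‖w‖ * ε :=
    (real_inner_le_norm w z).trans (mul_le_mul_of_nonneg_left hzε hw.le)
  have hwc : inner ℝ w c = (ε + r) * ‖w‖ := by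
    rw [real_inner_smul_right, real_inner_self_eq_norm_sq]
    field_simp
  have hwx : -(‖w‖ * r) ≤ inner ℝ w (x - c) := by
    have := (abs_le.1 ((abs_real_inner_le_norm w (x - c)).trans
      (mul_le_mul_of_nonneg_left (mem_closedBall_iff_norm.1 hx) hw.le))).1
    linarith
  have := hfP x hxP
  rw [hf, show x = c + (x - c) by abel, inner_add_right] at this
  rw [hf] at hfz
  linarith

theorem stmt2_general {n : ℕ} (hn : 2 ≤ n)
    (K : Set (EuclideanSpace ℝ (Fin n)))
    (hKcp : IsCompact K)
    (ε : ℝ) (hε : 0 < ε)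
    (hball : Metric.closedBall (0 : EuclideanSpace ℝ (Fin n)) ε ⊆ interior K)
    (q : ℝ) (hq0 : 0 < q) (hqn : q ≤ n) :
    ∃ η > (0 : ℝ), ∀ P : Set (EuclideanSpace ℝ (Fin n)),
      P.Nonempty → IsCompact P → Convex ℝ P →
      ¬ Metric.closedBall (0 : EuclideanSpace ℝ (Fin n)) ε ⊆ P →
      η ≤ ∫ x in K \ P, ‖x‖ ^ (q - (n : ℝ)) := by
  obtain ⟨δ, hδ, hδK⟩ := exists_closedBall_subset_of_closedBall_subset_interior hε.le hball
  have hInt : IntegrableOn (fun x : EuclideanSpace ℝ (Fin n) ↦ ‖x‖ ^ (q - n)) K :=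
    integrableOn_norm_rpow_of_isCompact (by simp; omega) (by simp; linarith) hKcp
  refine ⟨(ε + δ) ^ (q - n) * volume.real (closedBall (0 : EuclideanSpace ℝ (Fin n)) (δ / 2)),
    mul_pos (by positivity) (ENNReal.toReal_pos (measure_closedBall_pos _ _ (half_pos hδ)).ne'
      measure_closedBall_lt_top.ne), fun P hPne hPcp hPcv hP ↦ ?_⟩
  obtain ⟨z, hz, hzP⟩ := not_subset.1 hP
  obtain ⟨c, hc, hcP⟩ := exists_closedBall_disjoint_of_notMem_convex hPne hPcv hPcp.isClosed hzP
    (mem_closedBall_zero_iff.1 hz) (half_pos hδ).le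
  have hnorm : ∀ x ∈ closedBall c (δ / 2), ε ≤ ‖x‖ ∧ ‖x‖ ≤ ε + δ := fun x hx ↦ by
    obtain ⟨hlo, hhi⟩ := hc ▸ norm_mem_Icc_of_mem_closedBall hx
    constructor <;> linarith
  have hBKP : closedBall c (δ / 2) ⊆ K \ P := fun x hx ↦
    ⟨hδK (mem_closedBall_zero_iff.2 (hnorm x hx).2), hcP.notMem_of_mem_left hx⟩
  calc (ε + δ) ^ (q - n) * volume.real (closedBall (0 : EuclideanSpace ℝ (Fin n)) (δ / 2))
      = (ε + δ) ^ (q - n) * volume.real (closedBall c (δ / 2)) := by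
        rw [Measure.addHaar_real_closedBall_center volume c]
    _ ≤ ∫ x in closedBall c (δ / 2), ‖x‖ ^ (q - n) :=
        setIntegral_ge_of_const_le_real measurableSet_closedBall measure_closedBall_lt_top.ne
          (fun x hx ↦ Real.rpow_le_rpow_of_nonpos (hε.trans_le (hnorm x hx).1) (hnorm x hx).2
            (by linarith))
          (hInt.mono_set (hBKP.trans sdiff_subset))
    _ ≤ ∫ x in K \ P, ‖x‖ ^ (q - n) :=
        setIntegral_mono_set (hInt.mono_set sdiff_subset)
          (ae_of_all _ fun x ↦ by positivity) hBKP.eventuallyLE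

/-- Let `K ⊆ ℝⁿ` (`n ≥ 2`) be a convex body, let `ε > 0` be such that `ε·Dₙ` is
contained in the interior of `K`, and let `0 < q ≤ n`. Then there is `η > 0` such that
every nonempty compact convex set `P ⊆ ℝⁿ` not containing `ε·Dₙ` satisfies
`∫_{K \ P} ‖x‖^{q-n} dx ≥ η`. -/
theorem stmt2 {n : ℕ} (hn : 2 ≤ n)
    (K : Set (EuclideanSpace ℝ (Fin n)))
    (hKcp : IsCompact K) (hKcv : Convex ℝ K) (hKint : (interior K).Nonempty)
    (ε : ℝ) (hε : 0 < ε)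
    (hball : Metric.closedBall (0 : EuclideanSpace ℝ (Fin n)) ε ⊆ interior K)
    (q : ℝ) (hq0 : 0 < q) (hqn : q ≤ n) :
    ∃ η > (0 : ℝ), ∀ P : Set (EuclideanSpace ℝ (Fin n)),
      P.Nonempty → IsCompact P → Convex ℝ P →
      ¬ Metric.closedBall (0 : EuclideanSpace ℝ (Fin n)) ε ⊆ P →
      η ≤ ∫ x in K \ P, ‖x‖ ^ (q - (n : ℝ)) :=
  stmt2_general hn K hKcp ε hε hball q hq0 hqn
end

section
/- Let n ≥ 2, let K, L ∈ 𝒦₀(ℝⁿ), and let q ∈ ℝ with |q| > n. Then |Ṽ_q(K) + Ṽ_q(L) − 2·Ṽ_q(K∩L)| = |Dₙ| · ∫_{S^{n−1}} |ρ_K(u)^q − ρ_L(u)^q| dσ(u) = (|q|/n) · ∫_{K△L} ‖x‖^{q−n} dx, and if q > n the quantity Ṽ_q(K) + Ṽ_q(L) − 2·Ṽ_q(K∩L) is itself nonnegative. -/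
open MeasureTheory

/-- The radial function `ρ_K(u) = max {r : r • u ∈ K}` of a set `K ⊆ ℝⁿ`. -/
noncomputable def radialFn {n : ℕ} (K : Set (EuclideanSpace ℝ (Fin n)))
    (u : EuclideanSpace ℝ (Fin n)) : ℝ :=
  sSup {r : ℝ | r • u ∈ K}

/-- The Lebesgue volume `|Dₙ|` of the closed Euclidean unit ball in `ℝⁿ`. -/
noncomputable def unitBallVolume (n : ℕ) : ℝ :=
  (volume (Metric.closedBall (0 : EuclideanSpace ℝ (Fin n)) 1)).toReal

/-- The `q`-th dual volume `Ṽ_q(K) = |Dₙ| ∫_{S^{n-1}} ρ_K(u)^q dσ(u)` for `|q| > n`. -/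
noncomputable def dualVolHigh (n : ℕ) (q : ℝ) (K : Set (EuclideanSpace ℝ (Fin n))) : ℝ :=
  unitBallVolume n * ∫ u : Metric.sphere (0 : EuclideanSpace ℝ (Fin n)) 1,
    radialFn K ↑u ^ q ∂(sphereProb n)

/-!
For a convex body `K` with `0` in its interior, `ρ_K = (gauge K)⁻¹` away from `0`, so that
`r • u ∈ K ↔ r ≤ ρ_K u` for `r ≥ 0`. Hence `ρ_{K∩L} = min ρ_K ρ_L`, and pointwise on the sphere
`ρ_K^q + ρ_L^q - 2 ρ_{K∩L}^q = sign q * |ρ_K^q - ρ_L^q|`; integrating gives the first identity and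
the sign statement. Each ray `ℝ₊ u` meets `K △ L` in the interval between `ρ_K u` and `ρ_L u`, so in
polar coordinates `dx = r^(n-1) dr dσ'`, where `σ'` has total mass `n |Dₙ|`, the integral of
`‖x‖^(q-n)` over `K △ L` is `n |Dₙ| ∫ |ρ_K^q - ρ_L^q| / |q| dσ`.
-/

open Set Metric Filter Topology
open scoped ENNReal

theorem rpow_add_rpow_sub_two_mul_min_rpow {a b : ℝ} (ha : 0 < a) (hb : 0 < b) (q : ℝ) :
    a ^ q + b ^ q - 2 * min a b ^ q = SignType.sign q * |a ^ q - b ^ q| := by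
  wlog hab : a ≤ b generalizing a b
  · rw [add_comm, min_comm, abs_sub_comm]
    exact this hb ha (le_of_not_ge hab)
  rw [min_eq_left hab]
  rcases lt_trichotomy q 0 with hq | rfl | hq
  · rw [sign_neg hq, SignType.coe_neg_one,
      abs_of_nonneg (sub_nonneg.2 (Real.rpow_le_rpow_of_nonpos ha hab hq.le))]
    ring
  · norm_num
  · rw [sign_pos hq, SignType.coe_one,
      abs_of_nonpos (sub_nonpos.2 (Real.rpow_le_rpow ha.le hab hq.le))]
    ring

theorem integral_uIoc_rpow_sub_one {a b q : ℝ} (ha : 0 < a) (hb : 0 < b) (hq : q ≠ 0) :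
    ∫ t in uIoc a b, t ^ (q - 1) = |a ^ q - b ^ q| / |q| := by
  have h0 : (0 : ℝ) ∉ uIcc a b := fun h => (lt_min ha hb).not_ge h.1
  have hnonneg : 0 ≤ ∫ t in uIoc a b, t ^ (q - 1) :=
    setIntegral_nonneg measurableSet_uIoc fun t ht =>
      Real.rpow_nonneg ((lt_min ha hb).trans ht.1).le _
  rw [← abs_of_nonneg hnonneg, ← intervalIntegral.abs_integral_eq_abs_integral_uIoc,
    integral_rpow (Or.inr ⟨by simpa [sub_eq_iff_eq_add] using hq, h0⟩), sub_add_cancel,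
    abs_div, abs_sub_comm]

theorem Iic_symmDiff_Iic {α : Type*} [LinearOrder α] (a b : α) :
    symmDiff (Iic a) (Iic b) = uIoc a b := by
  rw [symmDiff_def, Iic_sdiff_Iic, Iic_sdiff_Iic]
  exact (union_comm _ _).trans Ioc_union_Ioc_symm

theorem smul_mem_iff_mul_gauge_le_one {E : Type*} [AddCommGroup E] [Module ℝ E]
    [TopologicalSpace E] [IsTopologicalAddGroup E] [ContinuousSMul ℝ E] {K : Set E}
    (hKc : IsClosed K) (hKcv : Convex ℝ K) (hK0 : K ∈ 𝓝 0) {r : ℝ} (hr : 0 ≤ r) (u : E) :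
    r • u ∈ K ↔ r * gauge K u ≤ 1 := by
  rw [← smul_eq_mul, ← gauge_smul_of_nonneg hr, gauge_le_one_iff_mem_closure hKcv hK0,
    hKc.closure_eq]

section Polar

variable {E : Type*} [NormedAddCommGroup E] [NormedSpace ℝ E] [FiniteDimensional ℝ E]
  [MeasurableSpace E] [BorelSpace E] [Nontrivial E]

theorem lintegral_volumeIoiPow (k : ℕ) {g : ℝ → ℝ≥0∞} (hg : Measurable g) :
    ∫⁻ r, g r ∂Measure.volumeIoiPow k = ∫⁻ r in Ioi (0 : ℝ), ENNReal.ofReal (r ^ k) * g r :=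
  (lintegral_withDensity_eq_lintegral_mul _
    (measurable_subtype_coe.pow_const k).ennreal_ofReal (hg.comp measurable_subtype_coe)).trans
    (lintegral_subtype_comap measurableSet_Ioi fun r => ENNReal.ofReal (r ^ k) * g r)

theorem lintegral_eq_lintegral_toSphere_lintegral_Ioi (μ : Measure E) [μ.IsAddHaarMeasure]
    {f : E → ℝ≥0∞} (hf : Measurable f) :
    ∫⁻ x, f x ∂μ = ∫⁻ u : sphere (0 : E) 1, (∫⁻ r in Ioi (0 : ℝ),
      ENNReal.ofReal (r ^ (Module.finrank ℝ E - 1)) * f (r • (u : E))) ∂μ.toSphere := by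
  calc ∫⁻ x, f x ∂μ = ∫⁻ x : ({0}ᶜ : Set E), f x ∂μ.comap (↑) := by
        rw [lintegral_subtype_comap (measurableSet_singleton 0).compl, restrict_compl_singleton]
    _ = ∫⁻ p : sphere (0 : E) 1 × Ioi (0 : ℝ), f ((p.2 : ℝ) • (p.1 : E))
          ∂μ.toSphere.prod (Measure.volumeIoiPow (Module.finrank ℝ E - 1)) := by
        rw [← ((μ.measurePreserving_homeomorphUnitSphereProd).symm
          (homeomorphUnitSphereProd E).toMeasurableEquiv).lintegral_comp_emb
          (MeasurableEquiv.measurableEmbedding _)]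
        rfl
    _ = _ := by
        have hpolar : Measurable fun p : sphere (0 : E) 1 × Ioi (0 : ℝ) =>
            f ((p.2 : ℝ) • (p.1 : E)) :=
          hf.comp ((measurable_subtype_coe.comp measurable_snd).smul
            (measurable_subtype_coe.comp measurable_fst))
        rw [lintegral_prod _ hpolar.aemeasurable]
        exact lintegral_congr fun u =>
          lintegral_volumeIoiPow (g := fun r => f (r • (u : E))) _
            (hf.comp (measurable_id.smul_const _))

end Polar

section ConvexBody

variable {n : ℕ} {K L : Set (EuclideanSpace ℝ (Fin n))} {u : EuclideanSpace ℝ (Fin n)}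

theorem gauge_pos_of_isCompact (hK : IsCompact K) (hK0 : K ∈ 𝓝 0) (hu : u ≠ 0) :
    0 < gauge K u :=
  (gauge_pos (absorbent_nhds_zero hK0) ((NormedSpace.isVonNBounded_iff ℝ).2 hK.isBounded)).2 hu

theorem radialFn_eq_inv_gauge (hK : IsCompact K) (hKcv : Convex ℝ K) (hK0 : K ∈ 𝓝 0)
    (hu : u ≠ 0) : radialFn K u = (gauge K u)⁻¹ := by
  have hg := gauge_pos_of_isCompact hK hK0 hu
  refine IsGreatest.csSup_eq ⟨?_, fun r (hr : r • u ∈ K) => ?_⟩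
  · show (gauge K u)⁻¹ • u ∈ K
    rw [smul_mem_iff_mul_gauge_le_one hK.isClosed hKcv hK0 (inv_nonneg.2 hg.le),
      inv_mul_cancel₀ hg.ne']
  · rcases le_or_gt r 0 with h | h
    · exact h.trans (inv_nonneg.2 hg.le)
    · rw [smul_mem_iff_mul_gauge_le_one hK.isClosed hKcv hK0 h.le] at hr
      rwa [← one_div, le_div_iff₀ hg]

theorem radialFn_pos (hK : IsCompact K) (hKcv : Convex ℝ K) (hK0 : K ∈ 𝓝 0) (hu : u ≠ 0) :
    0 < radialFn K u := by
  rw [radialFn_eq_inv_gauge hK hKcv hK0 hu]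
  exact inv_pos.2 (gauge_pos_of_isCompact hK hK0 hu)

theorem smul_mem_iff_le_radialFn (hK : IsCompact K) (hKcv : Convex ℝ K) (hK0 : K ∈ 𝓝 0)
    (hu : u ≠ 0) {r : ℝ} (hr : 0 ≤ r) : r • u ∈ K ↔ r ≤ radialFn K u := by
  rw [smul_mem_iff_mul_gauge_le_one hK.isClosed hKcv hK0 hr, radialFn_eq_inv_gauge hK hKcv hK0 hu,
    ← one_div, le_div_iff₀ (gauge_pos_of_isCompact hK hK0 hu)]

theorem continuousOn_radialFn (hK : IsCompact K) (hKcv : Convex ℝ K) (hK0 : K ∈ 𝓝 0) :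
    ContinuousOn (radialFn K) {0}ᶜ := by
  refine ((continuous_gauge hKcv hK0).continuousOn.inv₀ fun u hu =>
    (gauge_pos_of_isCompact hK hK0 hu).ne').congr fun u hu => ?_
  exact radialFn_eq_inv_gauge hK hKcv hK0 hu

theorem radialFn_inter (hK : IsCompact K) (hKcv : Convex ℝ K) (hK0 : K ∈ 𝓝 0)
    (hL : IsCompact L) (hLcv : Convex ℝ L) (hL0 : L ∈ 𝓝 0) (hu : u ≠ 0) :
    radialFn (K ∩ L) u = min (radialFn K u) (radialFn L u) := by
  have hle_iff : ∀ r : ℝ, 0 ≤ r →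
      (r ≤ radialFn (K ∩ L) u ↔ r ≤ min (radialFn K u) (radialFn L u)) := by
    intro r hr
    rw [← smul_mem_iff_le_radialFn (hK.inter hL) (hKcv.inter hLcv) (inter_mem hK0 hL0) hu hr,
      le_min_iff, ← smul_mem_iff_le_radialFn hK hKcv hK0 hu hr,
      ← smul_mem_iff_le_radialFn hL hLcv hL0 hu hr, mem_inter_iff]
  have hKL := radialFn_pos (hK.inter hL) (hKcv.inter hLcv) (inter_mem hK0 hL0) hu
  have hmin := le_min (radialFn_pos hK hKcv hK0 hu).le (radialFn_pos hL hLcv hL0 hu).le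
  exact le_antisymm ((hle_iff _ hKL.le).1 le_rfl) ((hle_iff _ hmin).2 le_rfl)

theorem smul_mem_symmDiff_iff (hK : IsCompact K) (hKcv : Convex ℝ K) (hK0 : K ∈ 𝓝 0)
    (hL : IsCompact L) (hLcv : Convex ℝ L) (hL0 : L ∈ 𝓝 0) (hu : u ≠ 0) {r : ℝ} (hr : 0 ≤ r) :
    r • u ∈ symmDiff K L ↔ r ∈ uIoc (radialFn K u) (radialFn L u) := by
  rw [← Iic_symmDiff_Iic, mem_symmDiff, mem_symmDiff, mem_Iic, mem_Iic,
    smul_mem_iff_le_radialFn hK hKcv hK0 hu hr, smul_mem_iff_le_radialFn hL hLcv hL0 hu hr]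

theorem volume_toSphere_univ_ne_zero (hn : n ≠ 0) :
    (volume : Measure (EuclideanSpace ℝ (Fin n))).toSphere univ ≠ 0 := by
  have : NeZero n := ⟨hn⟩
  exact Measure.measure_univ_ne_zero.2 (Measure.toSphere_ne_zero _)

theorem isProbabilityMeasure_sphereProb (hn : n ≠ 0) : IsProbabilityMeasure (sphereProb n) :=
  ⟨ENNReal.inv_mul_cancel (volume_toSphere_univ_ne_zero hn) (measure_ne_top _ _)⟩

theorem lintegral_volume_toSphere (hn : n ≠ 0)
    (f : sphere (0 : EuclideanSpace ℝ (Fin n)) 1 → ℝ≥0∞) :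
    ∫⁻ u, f u ∂(volume : Measure (EuclideanSpace ℝ (Fin n))).toSphere
      = (volume : Measure (EuclideanSpace ℝ (Fin n))).toSphere univ * ∫⁻ u, f u ∂sphereProb n := by
  rw [sphereProb, lintegral_smul_measure, smul_eq_mul, ← mul_assoc,
    ENNReal.mul_inv_cancel (volume_toSphere_univ_ne_zero hn) (measure_ne_top _ _), one_mul]

theorem volume_toSphere_real_univ (hn : n ≠ 0) :
    (volume : Measure (EuclideanSpace ℝ (Fin n))).toSphere.real univ = n * unitBallVolume n := by
  have : NeZero n := ⟨hn⟩
  rw [Measure.toSphere_real_apply_univ, finrank_euclideanSpace_fin, unitBallVolume,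
    ← measureReal_def, Measure.addHaar_real_closedBall_eq_addHaar_real_ball]

theorem integrable_radialFn_rpow (hn : n ≠ 0) (hK : IsCompact K) (hKcv : Convex ℝ K)
    (hK0 : K ∈ 𝓝 0) (q : ℝ) :
    Integrable (fun u : sphere (0 : EuclideanSpace ℝ (Fin n)) 1 => radialFn K u ^ q)
      (sphereProb n) := by
  have := isProbabilityMeasure_sphereProb hn
  have hcont : Continuous fun u : sphere (0 : EuclideanSpace ℝ (Fin n)) 1 => radialFn K u :=
    (continuousOn_radialFn hK hKcv hK0).comp_continuous continuous_subtype_val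
      fun u => ne_zero_of_mem_unit_sphere u
  exact (hcont.rpow_const fun u => Or.inl (radialFn_pos hK hKcv hK0
    (ne_zero_of_mem_unit_sphere u)).ne').integrable_of_hasCompactSupport
    (HasCompactSupport.of_compactSpace _)

theorem dualVolHigh_add_sub_two_mul_inter (hn : n ≠ 0)
    (hK : IsCompact K) (hKcv : Convex ℝ K) (hK0 : K ∈ 𝓝 0)
    (hL : IsCompact L) (hLcv : Convex ℝ L) (hL0 : L ∈ 𝓝 0) (q : ℝ) :
    dualVolHigh n q K + dualVolHigh n q L - 2 * dualVolHigh n q (K ∩ L)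
      = SignType.sign q * (unitBallVolume n * ∫ u : sphere (0 : EuclideanSpace ℝ (Fin n)) 1,
          |radialFn K u ^ q - radialFn L u ^ q| ∂sphereProb n) := by
  have hKi := integrable_radialFn_rpow hn hK hKcv hK0 q
  have hLi := integrable_radialFn_rpow hn hL hLcv hL0 q
  have hKLi := integrable_radialFn_rpow hn (hK.inter hL) (hKcv.inter hLcv) (inter_mem hK0 hL0) q
  have hpointwise : ∀ u : sphere (0 : EuclideanSpace ℝ (Fin n)) 1,
      radialFn K u ^ q + radialFn L u ^ q - 2 * radialFn (K ∩ L) u ^ q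
        = SignType.sign q * |radialFn K u ^ q - radialFn L u ^ q| := fun u => by
    have hu := ne_zero_of_mem_unit_sphere u
    rw [radialFn_inter hK hKcv hK0 hL hLcv hL0 hu]
    exact rpow_add_rpow_sub_two_mul_min_rpow (radialFn_pos hK hKcv hK0 hu)
      (radialFn_pos hL hLcv hL0 hu) q
  have hintegral := integral_sub (hKi.add hLi) (hKLi.const_mul 2)
  simp only [Pi.add_apply] at hintegral
  rw [integral_add hKi hLi, integral_const_mul, integral_congr_ae (.of_forall hpointwise),
    integral_const_mul] at hintegral
  simp only [dualVolHigh]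
  linear_combination -unitBallVolume n * hintegral

theorem lintegral_Ioi_indicator_symmDiff (hn : n ≠ 0)
    (hK : IsCompact K) (hKcv : Convex ℝ K) (hK0 : K ∈ 𝓝 0)
    (hL : IsCompact L) (hLcv : Convex ℝ L) (hL0 : L ∈ 𝓝 0) {q : ℝ} (hq : q ≠ 0)
    (hu : ‖u‖ = 1) :
    ∫⁻ r in Ioi (0 : ℝ), ENNReal.ofReal (r ^ (n - 1)) *
        (symmDiff K L).indicator (fun x => ENNReal.ofReal (‖x‖ ^ (q - n))) (r • u)
      = ENNReal.ofReal (|radialFn K u ^ q - radialFn L u ^ q| / |q|) := by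
  have hu0 : u ≠ 0 := norm_ne_zero_iff.1 (hu ▸ one_ne_zero)
  have ha := radialFn_pos hK hKcv hK0 hu0
  have hb := radialFn_pos hL hLcv hL0 hu0
  have hsubset : uIoc (radialFn K u) (radialFn L u) ⊆ Ioi 0 := fun t ht => (lt_min ha hb).trans ht.1
  have hpointwise : ∀ r ∈ Ioi (0 : ℝ), ENNReal.ofReal (r ^ (n - 1)) *
        (symmDiff K L).indicator (fun x => ENNReal.ofReal (‖x‖ ^ (q - n))) (r • u)
      = (uIoc (radialFn K u) (radialFn L u)).indicator
          (fun t => ENNReal.ofReal (t ^ (q - 1))) r := by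
    intro r (hr : 0 < r)
    have hmem := smul_mem_symmDiff_iff hK hKcv hK0 hL hLcv hL0 hu0 hr.le
    by_cases hr' : r ∈ uIoc (radialFn K u) (radialFn L u)
    · rw [indicator_of_mem (hmem.2 hr'), indicator_of_mem hr', norm_smul, hu, mul_one,
        Real.norm_of_nonneg hr.le, ← ENNReal.ofReal_mul (by positivity), ← Real.rpow_natCast,
        ← Real.rpow_add hr, Nat.cast_sub (Nat.one_le_iff_ne_zero.2 hn), Nat.cast_one]
      congr 2
      ring
    · rw [indicator_of_notMem (mt hmem.1 hr'), indicator_of_notMem hr', mul_zero]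
  have hintegrable : IntegrableOn (fun t : ℝ => t ^ (q - 1)) (uIoc (radialFn K u) (radialFn L u)) :=
    intervalIntegrable_iff.1 (intervalIntegral.intervalIntegrable_rpow
      (Or.inr fun h => (lt_min ha hb).not_ge h.1))
  rw [setLIntegral_congr_fun measurableSet_Ioi hpointwise, lintegral_indicator measurableSet_uIoc,
    Measure.restrict_restrict measurableSet_uIoc, inter_eq_left.2 hsubset,
    ← ofReal_integral_eq_lintegral_ofReal hintegrable, integral_uIoc_rpow_sub_one ha hb hq]
  filter_upwards [ae_restrict_mem measurableSet_uIoc] with t ht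
  exact Real.rpow_nonneg (hsubset ht).le _

theorem setIntegral_symmDiff_norm_rpow (hn : n ≠ 0)
    (hK : IsCompact K) (hKcv : Convex ℝ K) (hK0 : K ∈ 𝓝 0)
    (hL : IsCompact L) (hLcv : Convex ℝ L) (hL0 : L ∈ 𝓝 0) {q : ℝ} (hq : q ≠ 0) :
    ∫ x in symmDiff K L, ‖x‖ ^ (q - n)
      = n / |q| * (unitBallVolume n * ∫ u : sphere (0 : EuclideanSpace ℝ (Fin n)) 1,
          |radialFn K u ^ q - radialFn L u ^ q| ∂sphereProb n) := by
  have : NeZero n := ⟨hn⟩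
  have hA : MeasurableSet (symmDiff K L) :=
    hK.isClosed.measurableSet.symmDiff hL.isClosed.measurableSet
  have hf : Measurable fun x : EuclideanSpace ℝ (Fin n) => ENNReal.ofReal (‖x‖ ^ (q - n)) :=
    (measurable_norm.pow_const _).ennreal_ofReal
  have hdiff : Integrable (fun u : sphere (0 : EuclideanSpace ℝ (Fin n)) 1 =>
      |radialFn K u ^ q - radialFn L u ^ q| / |q|) (sphereProb n) :=
    ((integrable_radialFn_rpow hn hK hKcv hK0 q).sub
      (integrable_radialFn_rpow hn hL hLcv hL0 q)).abs.div_const _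
  have hlintegral : ∫⁻ x in symmDiff K L, ENNReal.ofReal (‖x‖ ^ (q - n))
      = (volume : Measure (EuclideanSpace ℝ (Fin n))).toSphere univ *
          ENNReal.ofReal (∫ u, |radialFn K u ^ q - radialFn L u ^ q| / |q| ∂sphereProb n) := by
    rw [← lintegral_indicator hA, lintegral_eq_lintegral_toSphere_lintegral_Ioi volume
      (hf.indicator hA), finrank_euclideanSpace_fin, lintegral_volume_toSphere hn,
      ofReal_integral_eq_lintegral_ofReal hdiff (.of_forall fun u => by positivity)]
    congr 1
    exact lintegral_congr fun u => lintegral_Ioi_indicator_symmDiff hn hK hKcv hK0 hL hLcv hL0 hq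
      (norm_eq_of_mem_sphere u)
  rw [integral_eq_lintegral_of_nonneg_ae (.of_forall fun x => by positivity)
    (measurable_norm.pow_const _).aestronglyMeasurable, hlintegral, ENNReal.toReal_mul,
    ← measureReal_def, volume_toSphere_real_univ hn,
    ENNReal.toReal_ofReal (integral_nonneg fun u => by positivity), integral_div]
  ring

end ConvexBody

/-- For convex bodies `K, L ⊆ ℝⁿ` (`n ≥ 2`) containing the origin in their interiors and
`|q| > n`:
`|Ṽ_q(K) + Ṽ_q(L) - 2Ṽ_q(K∩L)| = |Dₙ| ∫_{S^{n-1}} |ρ_K^q - ρ_L^q| dσ`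
`= (|q|/n) ∫_{K △ L} ‖x‖^{q-n} dx`, and the dual volume deviation is nonnegative
when `q > n`. -/
theorem stmt5 {n : ℕ} (hn : 2 ≤ n)
    (K L : Set (EuclideanSpace ℝ (Fin n)))
    (hKcp : IsCompact K) (hKcv : Convex ℝ K) (hKint : 0 ∈ interior K)
    (hLcp : IsCompact L) (hLcv : Convex ℝ L) (hLint : 0 ∈ interior L)
    (q : ℝ) (hq : (n : ℝ) < |q|) :
    |dualVolHigh n q K + dualVolHigh n q L - 2 * dualVolHigh n q (K ∩ L)|
      = unitBallVolume n * ∫ u : Metric.sphere (0 : EuclideanSpace ℝ (Fin n)) 1,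
          |radialFn K ↑u ^ q - radialFn L ↑u ^ q| ∂(sphereProb n)
    ∧ unitBallVolume n * (∫ u : Metric.sphere (0 : EuclideanSpace ℝ (Fin n)) 1,
          |radialFn K ↑u ^ q - radialFn L ↑u ^ q| ∂(sphereProb n))
      = (|q| / (n : ℝ)) * ∫ x in symmDiff K L, ‖x‖ ^ (q - (n : ℝ))
    ∧ ((n : ℝ) < q →
        0 ≤ dualVolHigh n q K + dualVolHigh n q L - 2 * dualVolHigh n q (K ∩ L)) := by
  have hn0 : n ≠ 0 := by omega
  have hq0 : q ≠ 0 := by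
    rintro rfl
    rw [abs_zero] at hq
    exact (Nat.cast_nonneg n).not_gt hq
  have hK0 := mem_interior_iff_mem_nhds.1 hKint
  have hL0 := mem_interior_iff_mem_nhds.1 hLint
  have hdev : 0 ≤ unitBallVolume n * ∫ u : sphere (0 : EuclideanSpace ℝ (Fin n)) 1,
      |radialFn K u ^ q - radialFn L u ^ q| ∂sphereProb n :=
    mul_nonneg ENNReal.toReal_nonneg (integral_nonneg fun _ => abs_nonneg _)
  rw [dualVolHigh_add_sub_two_mul_inter hn0 hKcp hKcv hK0 hLcp hLcv hL0 q,
    setIntegral_symmDiff_norm_rpow hn0 hKcp hKcv hK0 hLcp hLcv hL0 hq0]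
  refine ⟨?_, ?_, fun hqn => ?_⟩
  · rw [abs_mul, abs_of_nonneg hdev]
    rcases hq0.lt_or_gt with hneg | hpos
    · rw [sign_neg hneg, SignType.coe_neg_one, abs_neg, abs_one, one_mul]
    · rw [sign_pos hpos, SignType.coe_one, abs_one, one_mul]
  · field_simp
  · rw [sign_pos ((Nat.cast_nonneg n).trans_lt hqn), SignType.coe_one, one_mul]
    exact hdev
end
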